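/- arXiv:2501.10227 — 3 statements merged into one kernel-verified Lean document; each statement's English description precedes it below -/
import Mathlib

section
/- (Lagrangian dual transform, upper-bound direction.) Let S ≥ 0 and I > 0 be real numbers. Then for every real α > −1, log(1 + α) − α + (1 + α)·S/(S + I) ≤ log(1 + S/I). -/
theorem stmt_2 (S I : ℝ) (hS : 0 ≤ S) (hI : 0 < I) (α : ℝ) (hα : -1 < α) :
    Real.log (1 + α) - α + (1 + α) * S / (S + I) ≤ Real.log (1 + S / I) := by
  have hSI : 0 < S + I := by linarith
  have hα1 : 0 < 1 + α := by linarith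
  have hb : 0 < 1 + S / I := by positivity
  have h1 : Real.log (1 + α) - Real.log (1 + S / I) ≤ (1 + α) / (1 + S / I) - 1 := by
    rw [← Real.log_div (ne_of_gt hα1) (ne_of_gt hb)]
    exact Real.log_le_sub_one_of_pos (by positivity)
  have h2 : (1 + α) / (1 + S / I) - 1 - α + (1 + α) * S / (S + I) = 0 := by
    field_simp
    ring
  linarith
end

section
/- (Lemma 1, upper-bound direction in concrete form.) Let f ∈ ℂᴸ, let w₁, …, w_K ∈ ℂᴸ with w_k the desired beamformer for index k ∈ {1,…,K}, and let σ > 0. Define R = log(1 + |fᴴw_k|² / (Σ_{j≠k} |fᴴw_j|² + σ²)) and, for real α > −1 and complex β, h(α, β) = 2√(1+α)·Re(conj(β)·fᴴw_k) − α − |β|²·(Σ_{j=1}^{K} |fᴴw_j|² + σ²) + log(1+α). Then h(α, β) ≤ R for all α > −1 and all β ∈ ℂ. -/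
/-! The bound is the Lagrangian-dual (quadratic-transform) form of the SINR rate. Writing
`D = |fᴴw_k|² + I` with `I = ∑_{j≠k} |fᴴw_j|² + σ²`, maximizing over `β` leaves
`(1 + α)|fᴴw_k|²/D - α + log(1 + α)`, and with `s = (1 + α) I / D` this is `1 - s + log(1 + α)`,
which is at most `log (D / I)` exactly because `log s ≤ s - 1`. -/

open Complex Finset

/-- The standard inner product `uᴴ v = ∑ ℓ conj(u ℓ) * v ℓ` on `ℂᴸ`. -/
noncomputable def dotc {L : ℕ} (u v : Fin L → ℂ) : ℂ := ∑ l, (starRingEnd ℂ) (u l) * v l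

theorem two_mul_re_conj_mul_sub_le {s D : ℝ} (hs : 0 ≤ s) (hD : 0 < D) (β c : ℂ) :
    2 * s * ((starRingEnd ℂ) β * c).re - ‖β‖ ^ 2 * D ≤ s ^ 2 * ‖c‖ ^ 2 / D := by
  have hre : ((starRingEnd ℂ) β * c).re ≤ ‖β‖ * ‖c‖ := by
    simpa only [norm_mul, Complex.norm_conj] using Complex.re_le_norm ((starRingEnd ℂ) β * c)
  rw [le_div_iff₀ hD]
  nlinarith [sq_nonneg (D * ‖β‖ - s * ‖c‖), mul_le_mul_of_nonneg_left hre hs]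

theorem Real.one_sub_mul_div_add_log_le_log_div {t x y : ℝ} (ht : 0 < t) (hx : 0 < x)
    (hy : 0 < y) : 1 - t * x / y + Real.log t ≤ Real.log (y / x) := by
  have h := Real.log_le_sub_one_of_pos (div_pos (mul_pos ht hx) hy)
  rw [Real.log_div (mul_pos ht hx).ne' hy.ne', Real.log_mul ht.ne' hx.ne'] at h
  rw [Real.log_div hy.ne' hx.ne']
  linarith

theorem stmt_5 {L K : ℕ} (f : Fin L → ℂ) (w : Fin K → Fin L → ℂ) (k : Fin K)
    (σ : ℝ) (hσ : 0 < σ) (α : ℝ) (hα : -1 < α) (β : ℂ) :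
    2 * Real.sqrt (1 + α) * ((starRingEnd ℂ) β * dotc f (w k)).re - α -
        ‖β‖ ^ 2 * ((∑ j, ‖dotc f (w j)‖ ^ 2) + σ ^ 2) +
        Real.log (1 + α) ≤
      Real.log (1 +
        ‖dotc f (w k)‖ ^ 2 /
          ((∑ j ∈ Finset.univ.erase k, ‖dotc f (w j)‖ ^ 2) + σ ^ 2)) := by
  set a := ‖dotc f (w k)‖ ^ 2
  set I := (∑ j ∈ Finset.univ.erase k, ‖dotc f (w j)‖ ^ 2) + σ ^ 2
  have ht : 0 < 1 + α := by linarith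
  have hI : 0 < I := by positivity
  have hD : 0 < a + I := by positivity
  have hsum : (∑ j, ‖dotc f (w j)‖ ^ 2) + σ ^ 2 = a + I := by
    rw [← Finset.add_sum_erase _ _ (Finset.mem_univ k)]; ring
  have hrate : 1 + a / I = (a + I) / I := by field_simp; ring
  have hquad := two_mul_re_conj_mul_sub_le (Real.sqrt_nonneg (1 + α)) hD β (dotc f (w k))
  rw [Real.sq_sqrt ht.le] at hquad
  have hlog := Real.one_sub_mul_div_add_log_le_log_div ht hI hD
  have hsplit : (1 + α) * a / (a + I) - α = 1 - (1 + α) * I / (a + I) := by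
    field_simp; ring
  rw [hsum, hrate]
  linarith
end

section
/- (Lemma 1, attainment at the closed-form auxiliary variables of eq. (12).) Let f ∈ ℂᴸ, let w₁, …, w_K ∈ ℂᴸ, let k ∈ {1,…,K}, and let σ > 0. Define α* = |fᴴw_k|² / (Σ_{j≠k} |fᴴw_j|² + σ²) and β* = √(1+α*)·fᴴw_k / (Σ_{j=1}^{K} |fᴴw_j|² + σ²). Then 2√(1+α*)·Re(conj(β*)·fᴴw_k) − α* − |β*|²·(Σ_{j=1}^{K} |fᴴw_j|² + σ²) + log(1+α*) = log(1 + |fᴴw_k|² / (Σ_{j≠k} |fᴴw_j|² + σ²)). -/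
/-! Write `c = fᴴw_k`, `T = ∑ⱼ |fᴴw_j|² + σ²`, `D = T − |c|² > 0` and `s = √(1 + α*)`, so that
`β* = s c / T`. At this `β*` the quadratic transform `2 s Re(conj β c) − |β|² T` equals
`s² |c|² / T`, and since `s² = 1 + α* = T / D` this is `|c|² / D = α*`. Hence everything but
`log (1 + α*)` cancels. -/

open Complex Finset

lemma quadraticTransform_eq (s T : ℝ) (c : ℂ) :
    2 * s * ((starRingEnd ℂ) ((s : ℂ) * c / (T : ℂ)) * c).re - ‖(s : ℂ) * c / (T : ℂ)‖ ^ 2 * T =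
      s ^ 2 * ‖c‖ ^ 2 / T := by
  have hre : ((starRingEnd ℂ) ((s : ℂ) * c / (T : ℂ)) * c).re = s * ‖c‖ ^ 2 / T := by
    rw [map_div₀, map_mul, conj_ofReal, conj_ofReal, div_mul_eq_mul_div, mul_assoc,
      mul_comm _ c, mul_conj, normSq_eq_norm_sq, ← ofReal_mul, ← ofReal_div,
      ofReal_re]
  have hnorm : ‖(s : ℂ) * c / (T : ℂ)‖ ^ 2 = s ^ 2 * ‖c‖ ^ 2 / T ^ 2 := by
    rw [norm_div, norm_mul, norm_real, norm_real, Real.norm_eq_abs, Real.norm_eq_abs, div_pow,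
      mul_pow, sq_abs, sq_abs]
  rw [hre, hnorm]
  rcases eq_or_ne T 0 with rfl | hT
  · simp
  · field_simp
    ring

theorem stmt_6 {L K : ℕ} (f : Fin L → ℂ) (w : Fin K → Fin L → ℂ) (k : Fin K)
    (σ : ℝ) (hσ : 0 < σ)
    (αs : ℝ) (βs : ℂ)
    (hαs : αs = ‖dotc f (w k)‖ ^ 2 /
      ((∑ j ∈ Finset.univ.erase k, ‖dotc f (w j)‖ ^ 2) + σ ^ 2))
    (hβs : βs = (Real.sqrt (1 + αs) : ℂ) * dotc f (w k) /
      (((∑ j, ‖dotc f (w j)‖ ^ 2) + σ ^ 2 : ℝ) : ℂ)) :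
    2 * Real.sqrt (1 + αs) * ((starRingEnd ℂ) βs * dotc f (w k)).re - αs -
        ‖βs‖ ^ 2 * ((∑ j, ‖dotc f (w j)‖ ^ 2) + σ ^ 2) +
        Real.log (1 + αs) =
      Real.log (1 +
        ‖dotc f (w k)‖ ^ 2 /
          ((∑ j ∈ Finset.univ.erase k, ‖dotc f (w j)‖ ^ 2) + σ ^ 2)) := by
  set c := dotc f (w k)
  set D := (∑ j ∈ Finset.univ.erase k, ‖dotc f (w j)‖ ^ 2) + σ ^ 2
  set T := (∑ j, ‖dotc f (w j)‖ ^ 2) + σ ^ 2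
  have hD : 0 < D := by
    have := Finset.sum_nonneg fun j (_ : j ∈ univ.erase k) => sq_nonneg ‖dotc f (w j)‖
    positivity
  have hTD : T = D + ‖c‖ ^ 2 := by
    simp only [T, D, c, ← Finset.sum_erase_add _ _ (Finset.mem_univ k)]
    ring
  have hsq : Real.sqrt (1 + αs) ^ 2 = T / D := by
    rw [Real.sq_sqrt (by rw [hαs]; positivity), hαs, hTD]
    field_simp
  have hαT : Real.sqrt (1 + αs) ^ 2 * ‖c‖ ^ 2 / T = αs := by
    rw [hsq, hαs]
    field_simp [show T ≠ 0 by rw [hTD]; positivity]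
  rw [← hαs, hβs]
  linarith [quadraticTransform_eq (Real.sqrt (1 + αs)) T c]
end
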